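/- Let σ², N₁, N₂ > 0 and 0 < D₂ ≤ D₁ ≤ σ². Then R̃_HB^CR(D₁, D₂) := (1/2)·log₂( σ²·(D₁+N₁+N₂)·(D₂+N₂) / ((σ²+N₁+N₂)·(D₁+N₂)·D₂) ) satisfies R̃_HB^CR(D₁, D₂) ≥ max( R_G^CR(D₁, N₁+N₂), R_G^CR(D₂, N₂) ), where R_G^CR(D, N) = (1/2)·log₂( σ²·(D+N) / ((σ²+N)·D) ). -/

import Mathlib

/-!
Each cut-set bound differs from the Heegard–Berger rate by `½ log₂` of a ratio
`((a + c) / a) / ((b + c) / b)` with `0 < a ≤ b` and `0 ≤ c`, which is at least `1` because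
`x ↦ (x + c) / x` is antitone on `(0, ∞)`: against `R_G^CR(D₁, N₁ + N₂)` take
`a = D₂, b = D₁, c = N₂`, against `R_G^CR(D₂, N₂)` take `a = D₁ + N₂, b = σ² + N₂, c = N₁`.
-/

noncomputable def RG_CR (σ2 N D : ℝ) : ℝ :=
  (1/2) * Real.logb 2 (σ2 * (D + N) / ((σ2 + N) * D))

noncomputable def RHB_CR (σ2 N₁ N₂ D₁ D₂ : ℝ) : ℝ :=
  (1/2) * Real.logb 2 (σ2 * (D₁ + N₁ + N₂) * (D₂ + N₂)
      / ((σ2 + N₁ + N₂) * (D₁ + N₂) * D₂))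

lemma add_div_self_le_add_div_self {a b c : ℝ} (ha : 0 < a) (hab : a ≤ b) (hc : 0 ≤ c) :
    (b + c) / b ≤ (a + c) / a := by
  rw [add_div, add_div, div_self (ha.trans_le hab).ne', div_self ha.ne']
  gcongr

lemma one_le_add_div_self_div_add_div_self {a b c : ℝ} (ha : 0 < a) (hab : a ≤ b) (hc : 0 ≤ c) :
    1 ≤ (a + c) / a / ((b + c) / b) := by
  have hb : 0 < b := ha.trans_le hab
  exact (one_le_div (by positivity)).2 (add_div_self_le_add_div_self ha hab hc)

lemma half_logb_two_le_half_logb_two_mul {x r : ℝ} (hx : 0 < x) (hr : 1 ≤ r) :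
    (1/2) * Real.logb 2 x ≤ (1/2) * Real.logb 2 (x * r) := by
  gcongr
  · norm_num
  · exact le_mul_of_one_le_right hx.le hr

section HeegardBerger

variable {σ2 N₁ N₂ D₁ D₂ : ℝ}

lemma RHB_CR_arg_eq_mul_left (hσ : 0 < σ2) (hN₁ : 0 < N₁) (hN₂ : 0 < N₂)
    (hD₁ : 0 < D₁) (hD₂ : 0 < D₂) :
    σ2 * (D₁ + N₁ + N₂) * (D₂ + N₂) / ((σ2 + N₁ + N₂) * (D₁ + N₂) * D₂)
      = σ2 * (D₁ + (N₁ + N₂)) / ((σ2 + (N₁ + N₂)) * D₁)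
        * ((D₂ + N₂) / D₂ / ((D₁ + N₂) / D₁)) := by
  field_simp
  ring

lemma RHB_CR_arg_eq_mul_right (hσ : 0 < σ2) (hN₁ : 0 < N₁) (hN₂ : 0 < N₂)
    (hD₁ : 0 < D₁) (hD₂ : 0 < D₂) :
    σ2 * (D₁ + N₁ + N₂) * (D₂ + N₂) / ((σ2 + N₁ + N₂) * (D₁ + N₂) * D₂)
      = σ2 * (D₂ + N₂) / ((σ2 + N₂) * D₂)
        * ((D₁ + N₂ + N₁) / (D₁ + N₂) / ((σ2 + N₂ + N₁) / (σ2 + N₂))) := by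
  field_simp
  ring

lemma RG_CR_le_RHB_CR_left (hσ : 0 < σ2) (hN₁ : 0 < N₁) (hN₂ : 0 < N₂)
    (hD₂ : 0 < D₂) (hD₂₁ : D₂ ≤ D₁) :
    RG_CR σ2 (N₁ + N₂) D₁ ≤ RHB_CR σ2 N₁ N₂ D₁ D₂ := by
  have hD₁ : 0 < D₁ := hD₂.trans_le hD₂₁
  rw [RHB_CR, RHB_CR_arg_eq_mul_left hσ hN₁ hN₂ hD₁ hD₂]
  exact half_logb_two_le_half_logb_two_mul (by positivity)
    (one_le_add_div_self_div_add_div_self hD₂ hD₂₁ hN₂.le)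

lemma RG_CR_le_RHB_CR_right (hσ : 0 < σ2) (hN₁ : 0 < N₁) (hN₂ : 0 < N₂)
    (hD₁ : 0 < D₁) (hD₂ : 0 < D₂) (hD₁σ : D₁ ≤ σ2) :
    RG_CR σ2 N₂ D₂ ≤ RHB_CR σ2 N₁ N₂ D₁ D₂ := by
  rw [RHB_CR, RHB_CR_arg_eq_mul_right hσ hN₁ hN₂ hD₁ hD₂]
  exact half_logb_two_le_half_logb_two_mul (by positivity)
    (one_le_add_div_self_div_add_div_self (by positivity) (by linarith) hN₁.le)

end HeegardBerger

theorem stmt_4 (σ2 N₁ N₂ D₁ D₂ : ℝ) (hσ : 0 < σ2) (hN₁ : 0 < N₁) (hN₂ : 0 < N₂)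
    (hD₂ : 0 < D₂) (hD₂₁ : D₂ ≤ D₁) (hD₁σ : D₁ ≤ σ2) :
    max (RG_CR σ2 (N₁ + N₂) D₁) (RG_CR σ2 N₂ D₂) ≤ RHB_CR σ2 N₁ N₂ D₁ D₂ :=
  max_le (RG_CR_le_RHB_CR_left hσ hN₁ hN₂ hD₂ hD₂₁)
    (RG_CR_le_RHB_CR_right hσ hN₁ hN₂ (hD₂.trans_le hD₂₁) hD₂ hD₁σ)
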